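/- Let f : C → C' be a homomorphism of abelian groups with finite kernel and finite cokernel, and define z(f) = |ker f| / |coker f|. If 0 → C₁ → C₂ → C₃ → 0 and 0 → C₁' → C₂' → C₃' → 0 are short exact sequences and f₁, f₂, f₃ form a morphism of these sequences, each with finite kernel and cokernel, then z(f₂) = z(f₁)·z(f₃). -/

import Mathlib

/-!
The snake lemma turns a morphism of short exact sequences into an exact sequence
`0 → ker f₁ → ker f₂ → ker f₃ → coker f₁ → coker f₂ → coker f₃ → 0` of finite groups, and in a
finite exact sequence starting and ending with `0` the alternating product of the orders is `1`,
since each order is the product of the orders of the images of the incoming and outgoing maps.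
-/

/-- `z(f) = |ker f| / |coker f|` for a homomorphism of abelian groups with
finite kernel and cokernel. -/
noncomputable def zmap {A B : Type*} [AddCommGroup A] [AddCommGroup B] (f : A →+ B) : ℚ :=
  (Nat.card f.ker : ℚ) / (Nat.card (B ⧸ f.range) : ℚ)

open Function

namespace Function.Exact

variable {A B C : Type*} [AddCommGroup A] [AddCommGroup B] [AddCommGroup C]

theorem card_eq_card_range_mul_card_range [Finite B] {f : A →+ B} {g : B →+ C} (h : Exact f g) :
    Nat.card B = Nat.card f.range * Nat.card g.range := by
  rw [AddSubgroup.card_eq_card_quotient_mul_card_addSubgroup g.ker,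
    Nat.card_congr (QuotientAddGroup.quotientKerEquivRange g).toEquiv, h.addMonoidHom_ker_eq,
    mul_comm]

end Function.Exact

theorem card_mul_card_mul_card_eq_of_exact {A₁ A₂ A₃ A₄ A₅ A₆ : Type*}
    [AddCommGroup A₁] [AddCommGroup A₂] [AddCommGroup A₃]
    [AddCommGroup A₄] [AddCommGroup A₅] [AddCommGroup A₆]
    [Finite A₂] [Finite A₃] [Finite A₄] [Finite A₅]
    {f₁ : A₁ →+ A₂} {f₂ : A₂ →+ A₃} {f₃ : A₃ →+ A₄} {f₄ : A₄ →+ A₅} {f₅ : A₅ →+ A₆}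
    (h₁ : Injective f₁) (h₁₂ : Exact f₁ f₂) (h₂₃ : Exact f₂ f₃) (h₃₄ : Exact f₃ f₄)
    (h₄₅ : Exact f₄ f₅) (h₅ : Surjective f₅) :
    Nat.card A₂ * Nat.card A₄ * Nat.card A₆ = Nat.card A₁ * Nat.card A₃ * Nat.card A₅ := by
  have hA₁ : Nat.card f₁.range = Nat.card A₁ :=
    (Nat.card_congr (f₁.ofInjective h₁).toEquiv).symm
  have hA₆ : Nat.card f₅.range = Nat.card A₆ := by
    rw [AddMonoidHom.range_eq_top.mpr h₅, AddSubgroup.card_top]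
  rw [h₁₂.card_eq_card_range_mul_card_range, h₂₃.card_eq_card_range_mul_card_range,
    h₃₄.card_eq_card_range_mul_card_range, h₄₅.card_eq_card_range_mul_card_range, ← hA₁, ← hA₆]
  ring

namespace AddMonoidHom

variable {A B A' B' : Type*} [AddCommGroup A] [AddCommGroup B] [AddCommGroup A'] [AddCommGroup B']
  {f : A →+ B} {f' : A' →+ B'} {a : A →+ A'} {b : B →+ B'}

def kerMap (h : ∀ x, f' (a x) = b (f x)) : f.ker →+ f'.ker :=
  (a.comp f.ker.subtype).codRestrict f'.ker fun x => by simp [h, mem_ker.mp x.2]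

def cokerMap (h : ∀ x, f' (a x) = b (f x)) : B ⧸ f.range →+ B' ⧸ f'.range :=
  QuotientAddGroup.map _ _ b (by rintro _ ⟨x, rfl⟩; exact ⟨a x, h x⟩)

@[simp]
theorem cokerMap_mk (h : ∀ x, f' (a x) = b (f x)) (y : B) :
    cokerMap h (y : B ⧸ f.range) = (b y : B' ⧸ f'.range) := rfl

theorem kerMap_injective (h : ∀ x, f' (a x) = b (f x)) (ha : Injective a) :
    Injective (kerMap h) :=
  fun _ _ hxy => Subtype.ext (ha (congrArg Subtype.val hxy))

theorem cokerMap_surjective (h : ∀ x, f' (a x) = b (f x)) (hb : Surjective b) :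
    Surjective (cokerMap h) :=
  QuotientAddGroup.map_surjective_of_surjective _ _ b (QuotientAddGroup.mk_surjective.comp hb) _

theorem exact_subtype_ker (f : A →+ B) : Exact f.ker.subtype f := fun y => by simp

theorem exact_mk'_range (f : A →+ B) : Exact f (QuotientAddGroup.mk' f.range) := fun y => by
  simp [QuotientAddGroup.eq_zero_iff]

end AddMonoidHom

section MorphismOfShortExactSequences

open AddMonoidHom

variable {C₁ C₂ C₃ C₁' C₂' C₃' : Type*}
  [AddCommGroup C₁] [AddCommGroup C₂] [AddCommGroup C₃]
  [AddCommGroup C₁'] [AddCommGroup C₂'] [AddCommGroup C₃']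
  {i : C₁ →+ C₂} {p : C₂ →+ C₃} {i' : C₁' →+ C₂'} {p' : C₂' →+ C₃'}
  {f₁ : C₁ →+ C₁'} {f₂ : C₂ →+ C₂'} {f₃ : C₃ →+ C₃'}
  (hcomm₁ : ∀ x, f₂ (i x) = i' (f₁ x)) (hcomm₂ : ∀ x, f₃ (p x) = p' (f₂ x))

theorem exact_kerMap_kerMap (hip : Exact i p) (hi' : Injective i') :
    Exact (kerMap hcomm₁) (kerMap hcomm₂) := by
  rintro ⟨y, hy⟩
  constructor
  · intro hpy
    obtain ⟨c, rfl⟩ := (hip y).mp (congrArg Subtype.val hpy)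
    have hc : f₁ c = 0 := hi' (by rw [← hcomm₁, mem_ker.mp hy, map_zero])
    exact ⟨⟨c, hc⟩, rfl⟩
  · rintro ⟨c, hc⟩
    cases hc
    exact Subtype.ext (hip.apply_apply_eq_zero c)

theorem exact_cokerMap_cokerMap (hip' : Exact i' p') (hp : Surjective p) :
    Exact (cokerMap hcomm₁) (cokerMap hcomm₂) := by
  intro q
  obtain ⟨y, rfl⟩ := QuotientAddGroup.mk_surjective q
  constructor
  · intro hy
    obtain ⟨z, hz⟩ := (QuotientAddGroup.eq_zero_iff _).mp hy
    obtain ⟨x, rfl⟩ := hp z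
    obtain ⟨c, hc⟩ := (hip' (y - f₂ x)).mp (by rw [map_sub, ← hcomm₂, hz, sub_self])
    refine ⟨c, ?_⟩
    rw [cokerMap_mk, hc, QuotientAddGroup.mk_sub,
      (QuotientAddGroup.eq_zero_iff _).mpr (mem_range.mpr ⟨x, rfl⟩), sub_zero]
  · rintro ⟨q, hq⟩
    obtain ⟨c, rfl⟩ := QuotientAddGroup.mk_surjective q
    rw [← hq, cokerMap_mk, cokerMap_mk, hip'.apply_apply_eq_zero, QuotientAddGroup.mk_zero]

theorem exists_connecting_exact (hip : Exact i p) (hip' : Exact i' p') (hp : Surjective p)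
    (hi' : Injective i') :
    ∃ δ : f₃.ker →+ C₁' ⧸ f₁.range,
      Exact (kerMap hcomm₂) δ ∧ Exact δ (cokerMap hcomm₁) := by
  have h₁ : i'.toIntLinearMap ∘ₗ f₁.toIntLinearMap = f₂.toIntLinearMap ∘ₗ i.toIntLinearMap :=
    LinearMap.ext fun x => (hcomm₁ x).symm
  have h₂ : p'.toIntLinearMap ∘ₗ f₂.toIntLinearMap = f₃.toIntLinearMap ∘ₗ p.toIntLinearMap :=
    LinearMap.ext fun x => (hcomm₂ x).symm
  refine ⟨(SnakeLemma.δ' _ _ _ _ _ hip _ _ hip' h₁ h₂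
    f₃.ker.subtype.toIntLinearMap (exact_subtype_ker f₃)
    (QuotientAddGroup.mk' f₁.range).toIntLinearMap (exact_mk'_range f₁) hp hi').toAddMonoidHom,
    ?_, ?_⟩
  · exact SnakeLemma.exact_δ'_right _ _ _ _ _ hip _ _ hip' h₁ h₂
      f₂.ker.subtype.toIntLinearMap (exact_subtype_ker f₂)
      f₃.ker.subtype.toIntLinearMap (exact_subtype_ker f₃)
      (QuotientAddGroup.mk' f₁.range).toIntLinearMap (exact_mk'_range f₁) hp hi'
      (kerMap hcomm₂).toIntLinearMap rfl Subtype.val_injective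
  · exact SnakeLemma.exact_δ'_left _ _ _ _ _ hip _ _ hip' h₁ h₂
      f₃.ker.subtype.toIntLinearMap (exact_subtype_ker f₃)
      (QuotientAddGroup.mk' f₁.range).toIntLinearMap (exact_mk'_range f₁)
      (QuotientAddGroup.mk' f₂.range).toIntLinearMap (exact_mk'_range f₂) hp hi'
      (cokerMap hcomm₁).toIntLinearMap rfl QuotientAddGroup.mk_surjective

end MorphismOfShortExactSequences

theorem zmap_multiplicative_general
    {C₁ C₂ C₃ C₁' C₂' C₃' : Type*}
    [AddCommGroup C₁] [AddCommGroup C₂] [AddCommGroup C₃]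
    [AddCommGroup C₁'] [AddCommGroup C₂'] [AddCommGroup C₃']
    (i : C₁ →+ C₂) (p : C₂ →+ C₃) (i' : C₁' →+ C₂') (p' : C₂' →+ C₃')
    (hi : Function.Injective i) (hp : Function.Surjective p) (hip : i.range = p.ker)
    (hi' : Function.Injective i') (hp' : Function.Surjective p') (hip' : i'.range = p'.ker)
    (f₁ : C₁ →+ C₁') (f₂ : C₂ →+ C₂') (f₃ : C₃ →+ C₃')
    (hcomm₁ : ∀ x : C₁, f₂ (i x) = i' (f₁ x))
    (hcomm₂ : ∀ x : C₂, f₃ (p x) = p' (f₂ x))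
    (h₁c : Finite (C₁' ⧸ f₁.range))
    (h₂k : Finite f₂.ker) (h₂c : Finite (C₂' ⧸ f₂.range))
    (h₃k : Finite f₃.ker) :
    zmap f₂ = zmap f₁ * zmap f₃ := by
  have hexact : Exact i p := AddMonoidHom.exact_iff.mpr hip.symm
  have hexact' : Exact i' p' := AddMonoidHom.exact_iff.mpr hip'.symm
  obtain ⟨δ, hker, hcoker⟩ := exists_connecting_exact hcomm₁ hcomm₂ hexact hexact' hp hi'
  have hcard := card_mul_card_mul_card_eq_of_exact (AddMonoidHom.kerMap_injective hcomm₁ hi)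
    (exact_kerMap_kerMap hcomm₁ hcomm₂ hexact hi') hker hcoker
    (exact_cokerMap_cokerMap hcomm₁ hcomm₂ hexact' hp)
    (AddMonoidHom.cokerMap_surjective hcomm₂ hp')
  have : Finite (C₃' ⧸ f₃.range) := .of_surjective _ (AddMonoidHom.cokerMap_surjective hcomm₂ hp')
  unfold zmap
  rw [div_mul_div_comm, div_eq_div_iff, ← mul_assoc]
  · exact_mod_cast hcard
  all_goals simp [Nat.card_ne_zero, Zero.instNonempty, *]

/-- For a morphism `(f₁, f₂, f₃)` of short exact sequences of abelian groups,
each component having finite kernel and cokernel, `z(f₂) = z(f₁)·z(f₃)`. -/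
theorem zmap_multiplicative
    {C₁ C₂ C₃ C₁' C₂' C₃' : Type*}
    [AddCommGroup C₁] [AddCommGroup C₂] [AddCommGroup C₃]
    [AddCommGroup C₁'] [AddCommGroup C₂'] [AddCommGroup C₃']
    (i : C₁ →+ C₂) (p : C₂ →+ C₃) (i' : C₁' →+ C₂') (p' : C₂' →+ C₃')
    (hi : Function.Injective i) (hp : Function.Surjective p) (hip : i.range = p.ker)
    (hi' : Function.Injective i') (hp' : Function.Surjective p') (hip' : i'.range = p'.ker)
    (f₁ : C₁ →+ C₁') (f₂ : C₂ →+ C₂') (f₃ : C₃ →+ C₃')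
    (hcomm₁ : ∀ x : C₁, f₂ (i x) = i' (f₁ x))
    (hcomm₂ : ∀ x : C₂, f₃ (p x) = p' (f₂ x))
    (h₁k : Finite f₁.ker) (h₁c : Finite (C₁' ⧸ f₁.range))
    (h₂k : Finite f₂.ker) (h₂c : Finite (C₂' ⧸ f₂.range))
    (h₃k : Finite f₃.ker) (h₃c : Finite (C₃' ⧸ f₃.range)) :
    zmap f₂ = zmap f₁ * zmap f₃ :=
  zmap_multiplicative_general i p i' p' hi hp hip hi' hp' hip' f₁ f₂ f₃ hcomm₁ hcomm₂ h₁c h₂k h₂c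
    h₃k
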